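/- Let K^{p,q} (p,q ≥ 0) be a double complex of modules over a ring R with anti-commuting differentials d : K^{p,q} → K^{p,q+1} and δ : K^{p,q} → K^{p+1,q} (d∘d = 0, δ∘δ = 0, d∘δ + δ∘d = 0). Let T^n = ⊕_{p+q=n} K^{p,q} with differential ∂ = d + δ, and let L^p = ker(d : K^{p,0} → K^{p,1}), which forms a subcomplex (L^•, δ) of T^•. If for every p ≥ 0 the row complex (K^{p,•}, d) is exact, then the inclusion L^• → T^• induces an isomorphism on cohomology in every degree. -/

import Mathlib

/-!
Exactness of the rows lets one push any cocycle of the total complex down the staircase: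
its component in the highest occupied row `q + 1` is a `d`-cocycle, hence `d y` for some
`y` in row `q`, and subtracting `∂ y` clears that row without changing the class. A cocycle
(resp. a coboundary relation) thus becomes one concentrated in bidegree `(n, 0)`, where it
is exactly a `δ`-cocycle of `L` (resp. a `δ`-coboundary relation in `L`).
-/

namespace DoubleComplexCohomology

variable {R : Type*} [Ring R] {K : ℕ → ℕ → Type*}
  [∀ p q, AddCommGroup (K p q)] [∀ p q, Module R (K p q)]

/-- The total differential `∂ = d + δ` of a (first-quadrant, anti-commutative) double
complex, acting on the graded pieces of the total complex (realised inside the full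
product `∀ p q, K p q`): the component of `∂ f` in bidegree `(p, q)` is
`d (f p (q-1)) + δ (f (p-1) q)` (the terms with a negative index being `0`). -/
def totD (d : ∀ p q, K p q →ₗ[R] K p (q + 1)) (δ : ∀ p q, K p q →ₗ[R] K (p + 1) q)
    (f : ∀ p q, K p q) : ∀ p q, K p q := fun p q =>
  (match (motive := ∀ q, K p q) q with
    | 0 => (0 : K p 0)
    | Nat.succ q' => d p q' (f p q')) +
  (match (motive := ∀ p, K p q) p with
    | 0 => (0 : K 0 q)
    | Nat.succ p' => δ p' q (f p' q))

def single (p₀ q₀ : ℕ) (y : K p₀ q₀) : ∀ p q, K p q :=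
  Pi.single (M := fun p => ∀ q, K p q) p₀ (Pi.single q₀ y)

lemma single_same (p₀ q₀ : ℕ) (y : K p₀ q₀) : single p₀ q₀ y p₀ q₀ = y := by
  simp [single]

lemma single_of_ne {p₀ q₀ p q : ℕ} (y : K p₀ q₀) (h : ¬(p = p₀ ∧ q = q₀)) :
    single p₀ q₀ y p q = 0 := by
  by_cases hp : p = p₀
  · subst hp
    simp [single, Pi.single_eq_of_ne (fun hq => h ⟨rfl, hq⟩)]
  · simp [single, Pi.single_eq_of_ne hp]

section Differential

variable (d : ∀ p q, K p q →ₗ[R] K p (q + 1)) (δ : ∀ p q, K p q →ₗ[R] K (p + 1) q)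

@[simp]
lemma totD_zero_zero (f : ∀ p q, K p q) : totD d δ f 0 0 = 0 := add_zero _

@[simp]
lemma totD_zero_succ (f : ∀ p q, K p q) (q : ℕ) :
    totD d δ f 0 (q + 1) = d 0 q (f 0 q) := add_zero _

@[simp]
lemma totD_succ_zero (f : ∀ p q, K p q) (p : ℕ) :
    totD d δ f (p + 1) 0 = δ p 0 (f p 0) := zero_add _

@[simp]
lemma totD_succ_succ (f : ∀ p q, K p q) (p q : ℕ) :
    totD d δ f (p + 1) (q + 1) = d (p + 1) q (f (p + 1) q) + δ p (q + 1) (f p (q + 1)) :=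
  rfl

lemma totD_add (f g : ∀ p q, K p q) : totD d δ (f + g) = totD d δ f + totD d δ g := by
  funext p q
  cases p <;> cases q <;> simp only [totD_zero_zero, totD_zero_succ, totD_succ_zero,
    totD_succ_succ, Pi.add_apply, map_add] <;> abel

def totDHom : (∀ p q, K p q) →+ (∀ p q, K p q) := AddMonoidHom.mk' (totD d δ) (totD_add d δ)

lemma totD_sub (f g : ∀ p q, K p q) : totD d δ (f - g) = totD d δ f - totD d δ g :=
  map_sub (totDHom d δ) f g

lemma totD_zero : totD d δ (0 : ∀ p q, K p q) = 0 := map_zero (totDHom d δ)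

lemma totD_eq_d_of_left_eq_zero {f : ∀ p q, K p q} {p q : ℕ}
    (hf : ∀ p', p = p' + 1 → f p' (q + 1) = 0) : totD d δ f p (q + 1) = d p q (f p q) := by
  cases p with
  | zero => exact totD_zero_succ d δ f q
  | succ p => rw [totD_succ_succ, hf p rfl, map_zero, add_zero]

lemma totD_single_of_ne {p₀ q₀ p q : ℕ} (y : K p₀ q₀)
    (h₁ : ¬(p = p₀ ∧ q = q₀ + 1)) (h₂ : ¬(p = p₀ + 1 ∧ q = q₀)) :
    totD d δ (single p₀ q₀ y) p q = 0 := by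
  cases p <;> cases q <;>
    simp (disch := omega) only [totD_zero_zero, totD_zero_succ, totD_succ_zero, totD_succ_succ,
      single_of_ne, map_zero, add_zero]

lemma totD_single_d (p₀ q₀ : ℕ) (y : K p₀ q₀) :
    totD d δ (single p₀ q₀ y) p₀ (q₀ + 1) = d p₀ q₀ y := by
  rw [totD_eq_d_of_left_eq_zero d δ fun p' h => single_of_ne y (by omega), single_same]

variable {d δ}
variable (hdd : ∀ p q (x : K p q), d p (q + 1) (d p q x) = 0)
  (hδδ : ∀ p q (x : K p q), δ (p + 1) q (δ p q x) = 0)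
  (hanti : ∀ p q (x : K p q), d (p + 1) q (δ p q x) + δ p (q + 1) (d p q x) = 0)

include hdd hδδ hanti in
lemma totD_totD (f : ∀ p q, K p q) : totD d δ (totD d δ f) = 0 := by
  funext p q
  match p, q with
  | 0, 0 | 0, 1 | 1, 0 => simp
  | 0, q + 2 => simp [hdd]
  | p + 2, 0 => simp [hδδ]
  | 1, 1 => simpa using hanti 0 0 _
  | 1, q + 2 => simpa [hdd] using hanti 0 (q + 1) (f 0 (q + 1))
  | p + 2, 1 => simpa [hδδ] using hanti (p + 1) 0 (f (p + 1) 0)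
  | p + 2, q + 2 =>
    simpa [hdd, hδδ, ← add_assoc] using hanti (p + 1) (q + 1) (f (p + 1) (q + 1))

include hdd hδδ hanti in
lemma totD_sub_totD (f g : ∀ p q, K p q) : totD d δ (f - totD d δ g) = totD d δ f := by
  rw [totD_sub, totD_totD hdd hδδ hanti, sub_zero]

variable (hrows : ∀ p q (x : K p (q + 1)), d p (q + 1) x = 0 → ∃ y : K p q, d p q y = x)

include hdd hδδ hanti hrows in
lemma exists_sub_totD_concentrated (n m : ℕ) :
    ∀ f : ∀ p q, K p q, (∀ p q, p + q ≠ n → f p q = 0) →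
      (∀ p q, m < q → f p q = 0) → (∀ p q, totD d δ f p (q + 1) = 0) →
      ∃ g : ∀ p q, K p q, (∀ p q, p + q + 1 ≠ n → g p q = 0) ∧
        ∀ p q, ¬(p = n ∧ q = 0) → f p q = totD d δ g p q := by
  induction m with
  | zero =>
    refine fun f hdeg hrow _ => ⟨0, fun _ _ _ => rfl, fun p q hpq => ?_⟩
    rw [totD_zero]
    exact if hq : q = 0 then hdeg p q (by omega) else hrow p q (by omega)
  | succ m ih =>
    intro f hdeg hrow hZ
    by_cases hmn : n < m + 1
    · exact ih f hdeg (fun p q _ => if h : m + 1 < q then hrow p q h else hdeg p q (by omega)) hZ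
    obtain ⟨p₀, rfl⟩ : ∃ p₀, n = p₀ + (m + 1) := ⟨n - (m + 1), by omega⟩
    have htop_cocycle : d p₀ (m + 1) (f p₀ (m + 1)) = 0 := by
      rw [← totD_eq_d_of_left_eq_zero d δ fun p' _ => hrow p' (m + 2) (by omega)]
      exact hZ p₀ (m + 1)
    obtain ⟨y, hy⟩ := hrows p₀ m _ htop_cocycle
    obtain ⟨g, hg_deg, hg⟩ := ih (f - totD d δ (single p₀ m y))
      (fun p q hpq => by
        rw [Pi.sub_apply, Pi.sub_apply, hdeg p q hpq,
          totD_single_of_ne d δ y (by omega) (by omega), sub_zero])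
      (fun p q hq => by
        by_cases htop : p = p₀ ∧ q = m + 1
        · obtain ⟨rfl, rfl⟩ := htop
          rw [Pi.sub_apply, Pi.sub_apply, totD_single_d, hy, sub_self]
        · rw [Pi.sub_apply, Pi.sub_apply, totD_single_of_ne d δ y htop (by omega)]
          exact if h : m + 1 < q then by rw [hrow p q h, sub_zero]
            else by rw [hdeg p q (fun h' => htop ⟨by omega, by omega⟩), sub_zero])
      (fun p q => by rw [totD_sub_totD hdd hδδ hanti, hZ])
    refine ⟨g + single p₀ m y, fun p q hpq => ?_, fun p q hpq => ?_⟩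
    · rw [Pi.add_apply, Pi.add_apply, hg_deg p q hpq, single_of_ne y (by omega), add_zero]
    · rw [totD_add, Pi.add_apply, Pi.add_apply, ← hg p q hpq, Pi.sub_apply, Pi.sub_apply,
        sub_add_cancel]

include hdd hδδ hanti hrows in
lemma exists_cohomologous_to_L (n : ℕ) (f : ∀ p q, K p q)
    (hdeg : ∀ p q, p + q ≠ n → f p q = 0) (hZ : ∀ p q, totD d δ f p (q + 1) = 0) :
    ∃ g : ∀ p q, K p q, (∀ p q, p + q + 1 ≠ n → g p q = 0) ∧
      (∀ p q, ¬(p = n ∧ q = 0) → f p q = totD d δ g p q) ∧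
      d n 0 ((f - totD d δ g) n 0) = 0 := by
  obtain ⟨g, hg_deg, hg⟩ := exists_sub_totD_concentrated hdd hδδ hanti hrows n n f hdeg
    (fun p q _ => hdeg p q (by omega)) hZ
  refine ⟨g, hg_deg, hg, ?_⟩
  have hres : ∀ p', n = p' + 1 → (f - totD d δ g) p' 1 = 0 := fun p' _ => by
    rw [Pi.sub_apply, Pi.sub_apply, hg p' 1 (by omega), sub_self]
  rw [← totD_eq_d_of_left_eq_zero d δ hres, totD_sub_totD hdd hδδ hanti]
  exact hZ n 0

end Differential

theorem inclusion_ker_to_total_quasiIso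
    (d : ∀ p q, K p q →ₗ[R] K p (q + 1)) (δ : ∀ p q, K p q →ₗ[R] K (p + 1) q)
    (hdd : ∀ p q (x : K p q), d p (q + 1) (d p q x) = 0)
    (hδδ : ∀ p q (x : K p q), δ (p + 1) q (δ p q x) = 0)
    (hanti : ∀ p q (x : K p q), d (p + 1) q (δ p q x) + δ p (q + 1) (d p q x) = 0)
    (hrows : ∀ p q (x : K p (q + 1)), d p (q + 1) x = 0 → ∃ y : K p q, d p q y = x) :
    -- surjectivity on cohomology in every degree `n`
    (∀ (n : ℕ) (f : ∀ p q, K p q), (∀ p q, p + q ≠ n → f p q = 0) →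
      (∀ p q, totD d δ f p q = 0) →
      ∃ (x : K n 0) (g : ∀ p q, K p q),
        d n 0 x = 0 ∧ δ n 0 x = 0 ∧
        (∀ p q, p + q + 1 ≠ n → g p q = 0) ∧
        f n 0 = x + totD d δ g n 0 ∧
        ∀ p q, ¬(p = n ∧ q = 0) → f p q = totD d δ g p q) ∧
    -- injectivity on cohomology in every degree `n + 1`
    (∀ (n : ℕ) (x : K (n + 1) 0), d (n + 1) 0 x = 0 → δ (n + 1) 0 x = 0 →
      (∃ g : ∀ p q, K p q, (∀ p q, p + q ≠ n → g p q = 0) ∧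
        totD d δ g (n + 1) 0 = x ∧ ∀ p q, ¬(p = n + 1 ∧ q = 0) → totD d δ g p q = 0) →
      ∃ y : K n 0, d n 0 y = 0 ∧ δ n 0 y = x) := by
  constructor
  · intro n f hdeg hcocycle
    obtain ⟨g, hg_deg, hg, hd⟩ :=
      exists_cohomologous_to_L hdd hδδ hanti hrows n f hdeg fun p q => hcocycle p (q + 1)
    refine ⟨(f - totD d δ g) n 0, g, hd, ?_, hg_deg, (sub_add_cancel _ _).symm, hg⟩
    rw [← totD_succ_zero d δ, totD_sub_totD hdd hδδ hanti, hcocycle]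
  · rintro n x - - ⟨g, hg_deg, hgx, hg_zero⟩
    obtain ⟨h, -, -, hd⟩ := exists_cohomologous_to_L hdd hδδ hanti hrows n g hg_deg
      fun p q => hg_zero p (q + 1) (by omega)
    refine ⟨(g - totD d δ h) n 0, hd, ?_⟩
    rw [← totD_succ_zero d δ, totD_sub_totD hdd hδδ hanti, hgx]

end DoubleComplexCohomology
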